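/- arXiv:2405.14104 — 3 statements merged into one kernel-verified Lean document; each statement's English description precedes it below -/
import Mathlib

section
/- For any observed distribution P with P{Z = z} > 0 for all z ∈ 𝒵 such that 𝐐₀(P, 𝐐*_{WE,M}) ≠ ∅, one has Θ₀(P, 𝐐*_{WE,M}) = Θ₀(P, 𝐐*_{WE}); that is, adding generalized monotonicity to weak instrument exogeneity does not change the identified set for the vector of average potential outcomes whenever these assumptions are consistent with P. -/
open Finset

/-- A probability mass function on a finite type. -/
structure ProbMass (α : Type) [Fintype α] where
  mass : α → ℝ
  nonneg : ∀ a, 0 ≤ mass a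
  total : ∑ a, mass a = 1

/-- Probability of an event under a probability mass function. -/
noncomputable def pr {α : Type} [Fintype α] (Q : ProbMass α) (A : Set α) : ℝ :=
  ∑ a, A.indicator Q.mass a

/-- Expectation of a real-valued function under a probability mass function. -/
noncomputable def expect {α : Type} [Fintype α] (Q : ProbMass α) (f : α → ℝ) : ℝ :=
  ∑ a, Q.mass a * f a

/-- The latent space: potential outcomes `(Y_d)_{d ∈ D}` taking values in the finite set
`𝒴 ⊂ ℝ`, potential treatments `(D_z)_{z ∈ Z}`, and the instrument `Z`. -/
abbrev Latent (𝒴 : Finset ℝ) (D Z : Type) : Type := (D → ↥𝒴) × (Z → D) × Z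

/-- The observed space: `(Y, D, Z)`. -/
abbrev Obs (𝒴 : Finset ℝ) (D Z : Type) : Type := ↥𝒴 × D × Z

variable {𝒴 : Finset ℝ} {D Z : Type} [Fintype D] [DecidableEq D] [Fintype Z] [DecidableEq Z]

/-- The map `T` sending `((y_d), (d_z), z)` to `(y_{d_z}, d_z, z)`. -/
def Tmap (ω : Latent 𝒴 D Z) : Obs 𝒴 D Z := (ω.1 (ω.2.1 ω.2.2), ω.2.1 ω.2.2, ω.2.2)

/-- `Q` rationalizes `P`: `P = Q ∘ T⁻¹`. -/
def Rationalizes (Q : ProbMass (Latent 𝒴 D Z)) (P : ProbMass (Obs 𝒴 D Z)) : Prop :=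
  ∀ o : Obs 𝒴 D Z, P.mass o = pr Q {ω | Tmap ω = o}

/-- Instrument exogeneity: `((Y_d), (D_z))` is independent of `Z` under `Q`. -/
def Exog (Q : ProbMass (Latent 𝒴 D Z)) : Prop :=
  ∀ (yd : D → ↥𝒴) (dz : Z → D) (z : Z),
    pr Q {ω | ω.1 = yd ∧ ω.2.1 = dz ∧ ω.2.2 = z}
      = pr Q {ω | ω.1 = yd ∧ ω.2.1 = dz} * pr Q {ω | ω.2.2 = z}

/-- `zs` maximally encourages treatment `d` under `Q`:
`Q{D_{zs} ≠ d and D_{z'} = d for some z'} = 0`. -/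
def MaxEnc (Q : ProbMass (Latent 𝒴 D Z)) (d : D) (zs : Z) : Prop :=
  pr Q {ω | ω.2.1 zs ≠ d ∧ ∃ z' : Z, ω.2.1 z' = d} = 0

/-- Generalized monotonicity. -/
def GenMono (Q : ProbMass (Latent 𝒴 D Z)) : Prop :=
  ∀ d : D, ∃ zs : Z, MaxEnc Q d zs

/-- `θ(Q) = (E_Q[Y_d])_{d ∈ D}`, the vector of average potential outcomes. -/
noncomputable def theta (Q : ProbMass (Latent 𝒴 D Z)) : D → ℝ :=
  fun d => expect Q fun ω => (ω.1 d : ℝ)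

/-- `𝐐₀(P, 𝐐)`: the set of `Q ∈ 𝐐` that rationalize `P`. -/
def Q0 (P : ProbMass (Obs 𝒴 D Z)) (QQ : Set (ProbMass (Latent 𝒴 D Z))) :
    Set (ProbMass (Latent 𝒴 D Z)) :=
  {Q | Q ∈ QQ ∧ Rationalizes Q P}

/-- `Θ₀(P, 𝐐)`: the identified set for `θ(Q)`. -/
noncomputable def Theta0 (P : ProbMass (Obs 𝒴 D Z))
    (QQ : Set (ProbMass (Latent 𝒴 D Z))) : Set (D → ℝ) :=
  theta '' Q0 P QQ

/-- Unrestricted potential outcomes: if `Q ∈ 𝐐`, `Q'` is exogenous, and the potential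
treatments have the same distribution under `Q'` as under `Q`, then `Q' ∈ 𝐐`. -/
def UnrestrictedPO (QQ : Set (ProbMass (Latent 𝒴 D Z))) : Prop :=
  ∀ Q ∈ QQ, ∀ Q' : ProbMass (Latent 𝒴 D Z), Exog Q' →
    (∀ dz : Z → D, pr Q' {ω | ω.2.1 = dz} = pr Q {ω | ω.2.1 = dz}) → Q' ∈ QQ

/-- `P{Z = z}`. -/
noncomputable def prZ (P : ProbMass (Obs 𝒴 D Z)) (z : Z) : ℝ :=
  pr P {o | o.2.2 = z}

/-- `P{D = d ∣ Z = z}`. -/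
noncomputable def condD (P : ProbMass (Obs 𝒴 D Z)) (d : D) (z : Z) : ℝ :=
  pr P {o | o.2.1 = d ∧ o.2.2 = z} / prZ P z

/-- `p_{yd|z} = P{Y = y, D = d ∣ Z = z}`. -/
noncomputable def pObs (P : ProbMass (Obs 𝒴 D Z)) (y : ℝ) (d : D) (z : Z) : ℝ :=
  pr P {o | (o.1 : ℝ) = y ∧ o.2.1 = d ∧ o.2.2 = z} / prZ P z

/-- `β_{d|z} = E_P[Y · 1{D = d} ∣ Z = z]`. -/
noncomputable def betaObs (P : ProbMass (Obs 𝒴 D Z)) (d : D) (z : Z) : ℝ :=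
  (expect P fun o => if o.2.1 = d ∧ o.2.2 = z then (o.1 : ℝ) else 0) / prZ P z

/-- Weak instrument exogeneity: for every `d ∈ 𝒟` and `z ∈ 𝒵`, the pair `(Y_d, D_z)` is
independent of `Z` under `Q`. -/
def WeakExog {𝒴 : Finset ℝ} {D Z : Type} [Fintype D] [DecidableEq D]
    [Fintype Z] [DecidableEq Z] (Q : ProbMass (Latent 𝒴 D Z)) : Prop :=
  ∀ (d : D) (z : Z) (y : ↥𝒴) (dv : D) (zv : Z),
    pr Q {ω | ω.1 d = y ∧ ω.2.1 z = dv ∧ ω.2.2 = zv}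
      = pr Q {ω | ω.1 d = y ∧ ω.2.1 z = dv} * pr Q {ω | ω.2.2 = zv}


/-!
Let `Qb` satisfy weak exogeneity and generalized monotonicity and rationalize `P`, with `z_d`
maximally encouraging treatment `d`, and let `Q` be any weakly exogenous distribution
rationalizing `P`. Because `P{Z = z} > 0`, weak exogeneity pins down the law of `Y_d` on
`{D_z = d}`, so `Q` and `Qb` agree on `E[Y_d 1{D_{z_d} = d}]` and on `Q{D_{z_d} ≠ d}`.
Under `Qb`, monotonicity makes `{D_{z_d} = d}` almost surely equal to the event that some
instrument value leads to `d`; off that event `Y_d` is never observed. Redrawing `Y_d` there,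
independently, from the law of `Y_d` given `D_{z_d} ≠ d` under `Q`, and then making `Z`
independent of everything with law `P_Z`, gives a distribution that keeps the treatments of `Qb`
(hence is monotone), is weakly exogenous, still rationalizes `P`, and has the means `E_Q[Y_d]`.
-/

namespace ProbMass

variable {α β : Type} [Fintype α] [Fintype β]

theorem pr_nonneg (Q : ProbMass α) (A : Set α) : 0 ≤ pr Q A :=
  Finset.sum_nonneg fun a _ => Set.indicator_nonneg (fun a _ => Q.nonneg a) a

theorem pr_eq_expect (Q : ProbMass α) (A : Set α) : pr Q A = expect Q (A.indicator 1) := by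
  refine Finset.sum_congr rfl fun a _ => ?_
  by_cases h : a ∈ A <;> simp [h]

theorem expect_add (Q : ProbMass α) (f g : α → ℝ) :
    expect Q (f + g) = expect Q f + expect Q g := by
  simp only [_root_.expect, Pi.add_apply, mul_add, Finset.sum_add_distrib]

theorem expect_one (Q : ProbMass α) : expect Q 1 = 1 := by
  simp [_root_.expect, Q.total]

theorem expect_indicator_add_compl (Q : ProbMass α) (A : Set α) (f : α → ℝ) :
    expect Q (A.indicator f) + expect Q (Aᶜ.indicator f) = expect Q f := by
  rw [← expect_add, Set.indicator_self_add_compl]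

theorem pr_univ (Q : ProbMass α) : pr Q Set.univ = 1 := by
  simp [pr, Q.total]

theorem pr_compl (Q : ProbMass α) (A : Set α) : pr Q Aᶜ = 1 - pr Q A := by
  rw [eq_sub_iff_add_eq', pr_eq_expect, pr_eq_expect, expect_indicator_add_compl, expect_one]

theorem mass_eq_zero_of_pr_eq_zero {Q : ProbMass α} {N : Set α} (hN : pr Q N = 0) {a : α}
    (ha : a ∈ N) : Q.mass a = 0 := by
  have := (Finset.sum_eq_zero_iff_of_nonneg fun b _ =>
    Set.indicator_nonneg (fun b _ => Q.nonneg b) b).1 hN a (Finset.mem_univ a)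
  rwa [Set.indicator_of_mem ha] at this

theorem expect_congr_of_pr_eq_zero {Q : ProbMass α} {N : Set α} (hN : pr Q N = 0)
    {f g : α → ℝ} (h : ∀ a ∉ N, f a = g a) : expect Q f = expect Q g := by
  refine Finset.sum_congr rfl fun a _ => ?_
  by_cases ha : a ∈ N
  · simp [mass_eq_zero_of_pr_eq_zero hN ha]
  · rw [h a ha]

theorem expect_indicator_congr {Q : ProbMass α} {N A B : Set α} (hN : pr Q N = 0)
    (h : ∀ a ∉ N, a ∈ A ↔ a ∈ B) (f : α → ℝ) :
    expect Q (A.indicator f) = expect Q (B.indicator f) := by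
  refine expect_congr_of_pr_eq_zero hN fun a ha => ?_
  by_cases hA : a ∈ A
  · rw [Set.indicator_of_mem hA, Set.indicator_of_mem ((h a ha).1 hA)]
  · rw [Set.indicator_of_notMem hA, Set.indicator_of_notMem (mt (h a ha).2 hA)]

theorem sum_pr_preimage_inter_mul (Q : ProbMass α) (f : α → β) (A : Set α) (g : β → ℝ) :
    ∑ b, pr Q (f ⁻¹' {b} ∩ A) * g b = expect Q (A.indicator fun a => g (f a)) := by
  simp only [pr, _root_.expect, Finset.sum_mul]
  rw [Finset.sum_comm]
  refine Finset.sum_congr rfl fun a _ => ?_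
  rw [Finset.sum_eq_single (f a) (fun b _ hb => by simp [Ne.symm hb]) (by simp)]
  by_cases ha : a ∈ A <;> simp [ha]

noncomputable def map (f : α → β) (Q : ProbMass α) : ProbMass β where
  mass b := pr Q (f ⁻¹' {b})
  nonneg b := pr_nonneg Q _
  total := by
    simpa [Q.total, _root_.expect] using sum_pr_preimage_inter_mul Q f Set.univ 1

theorem expect_map (Q : ProbMass α) (f : α → β) (g : β → ℝ) :
    expect (Q.map f) g = expect Q (g ∘ f) := by
  simpa [_root_.expect, map, mul_comm] using sum_pr_preimage_inter_mul Q f Set.univ g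

theorem pr_map (Q : ProbMass α) (f : α → β) (B : Set β) : pr (Q.map f) B = pr Q (f ⁻¹' B) := by
  rw [pr_eq_expect, pr_eq_expect, expect_map]
  congr 1

noncomputable def prod (Q : ProbMass α) (R : ProbMass β) : ProbMass (α × β) where
  mass p := Q.mass p.1 * R.mass p.2
  nonneg p := mul_nonneg (Q.nonneg _) (R.nonneg _)
  total := by rw [Fintype.sum_prod_type, ← Finset.sum_mul_sum, Q.total, R.total, one_mul]

theorem expect_prod_mul (Q : ProbMass α) (R : ProbMass β) (f : α → ℝ) (g : β → ℝ) :
    expect (Q.prod R) (fun p => f p.1 * g p.2) = expect Q f * expect R g := by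
  simp only [_root_.expect, Fintype.sum_prod_type, Finset.sum_mul_sum]
  refine Finset.sum_congr rfl fun a _ => Finset.sum_congr rfl fun b _ => ?_
  simp only [prod]
  ring

theorem expect_prod_fst (Q : ProbMass α) (R : ProbMass β) (f : α → ℝ) :
    expect (Q.prod R) (fun p => f p.1) = expect Q f := by
  simpa [expect_one] using expect_prod_mul Q R f 1

theorem pr_prod_preimage_fst (Q : ProbMass α) (R : ProbMass β) (A : Set α) :
    pr (Q.prod R) (Prod.fst ⁻¹' A) = pr Q A := by
  rw [pr_eq_expect, pr_eq_expect, ← expect_prod_fst Q R]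
  rfl

theorem pr_prod (Q : ProbMass α) (R : ProbMass β) (A : Set α) (B : Set β) :
    pr (Q.prod R) (A ×ˢ B) = pr Q A * pr R B := by
  simp only [pr_eq_expect, ← expect_prod_mul]
  congr 1
  funext p
  exact Set.indicator_prod_one

noncomputable def pi {ι : Type} [Fintype ι] [DecidableEq ι] (ν : ι → ProbMass β) :
    ProbMass (ι → β) where
  mass u := ∏ i, (ν i).mass (u i)
  nonneg u := Finset.prod_nonneg fun i _ => (ν i).nonneg _
  total := by simp [← Fintype.prod_sum, (ν _).total]

theorem expect_pi_apply {ι : Type} [Fintype ι] [DecidableEq ι] (ν : ι → ProbMass β) (i : ι)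
    (g : β → ℝ) : expect (pi ν) (fun u => g (u i)) = expect (ν i) g := by
  have factor : ∀ u : ι → β, (pi ν).mass u * g (u i)
      = ∏ j, (ν j).mass (u j) * (if j = i then g (u j) else 1) := fun u => by
    rw [Finset.prod_mul_distrib, Fintype.prod_ite_eq']
    rfl
  calc expect (pi ν) (fun u => g (u i))
      = ∑ u : ι → β, ∏ j, (ν j).mass (u j) * (if j = i then g (u j) else 1) :=
        Finset.sum_congr rfl fun u _ => factor u
    _ = ∏ j, ∑ b, (ν j).mass b * (if j = i then g b else 1) :=
        (Fintype.prod_sum fun j b => (ν j).mass b * (if j = i then g b else 1)).symm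
    _ = ∏ j, if j = i then expect (ν j) g else 1 := Finset.prod_congr rfl fun j _ => by
        split_ifs
        · rfl
        · simp [(ν j).total]
    _ = expect (ν i) g := Fintype.prod_ite_eq' i _

noncomputable def cond (Q : ProbMass α) (A : Set α) (hA : pr Q A ≠ 0) : ProbMass α where
  mass a := A.indicator Q.mass a / pr Q A
  nonneg a := div_nonneg (Set.indicator_nonneg (fun a _ => Q.nonneg a) a) (pr_nonneg Q A)
  total := by rw [← Finset.sum_div]; exact div_self hA

theorem pr_mul_expect_cond (Q : ProbMass α) (A : Set α) (hA : pr Q A ≠ 0) (f : α → ℝ) :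
    pr Q A * expect (Q.cond A hA) f = expect Q (A.indicator f) := by
  simp only [_root_.expect, cond, Finset.mul_sum]
  refine Finset.sum_congr rfl fun a _ => ?_
  by_cases ha : a ∈ A
  · simp only [Set.indicator_of_mem ha]
    field_simp
  · simp [ha]

theorem exists_pr_mul_expect_eq (Q : ProbMass α) (A : Set α) (f : α → β) (g : β → ℝ) :
    ∃ ν : ProbMass β, pr Q A * expect ν g = expect Q (A.indicator fun a => g (f a)) := by
  by_cases hA : pr Q A = 0
  · refine ⟨Q.map f, ?_⟩
    rw [hA, zero_mul, expect_indicator_congr hA (B := ∅) (fun a ha => iff_of_false ha id)]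
    simp [_root_.expect]
  · exact ⟨(Q.cond A hA).map f, by rw [expect_map, pr_mul_expect_cond]; rfl⟩

end ProbMass

open ProbMass

section Identification

variable {P : ProbMass (Obs 𝒴 D Z)} {Q Q' : ProbMass (Latent 𝒴 D Z)}

omit [Fintype D] [DecidableEq D] [Fintype Z] [DecidableEq Z] in
theorem setOf_Tmap_eq (y : ↥𝒴) (d : D) (z : Z) :
    {ω : Latent 𝒴 D Z | Tmap ω = (y, d, z)} = {ω | ω.1 d = y ∧ ω.2.1 z = d ∧ ω.2.2 = z} := by
  ext ⟨yd, dz, z'⟩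
  simp only [Tmap, Prod.mk.injEq, Set.mem_ofPred_eq]
  constructor <;> rintro ⟨rfl, rfl, rfl⟩ <;> exact ⟨rfl, rfl, rfl⟩

theorem Rationalizes.eq_map (hR : Rationalizes Q P) : P = Q.map Tmap := by
  obtain ⟨m, _, _⟩ := P
  congr
  funext o
  exact hR o

theorem Rationalizes.pr_instrument (hR : Rationalizes Q P) (z : Z) :
    pr Q {ω | ω.2.2 = z} = prZ P z := by
  rw [prZ, hR.eq_map, pr_map]
  rfl

theorem WeakExog.pr_outcome_treatment_mul (hW : WeakExog Q) (hR : Rationalizes Q P) (y : ↥𝒴)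
    (d : D) (z : Z) : pr Q {ω | ω.1 d = y ∧ ω.2.1 z = d} * prZ P z = P.mass (y, d, z) := by
  rw [hR (y, d, z), setOf_Tmap_eq, hW, hR.pr_instrument]

theorem expect_indicator_treatment_eq (hW : WeakExog Q) (hR : Rationalizes Q P)
    (hW' : WeakExog Q') (hR' : Rationalizes Q' P) {z : Z} (hz : prZ P z ≠ 0) (d : D)
    (h : ↥𝒴 → ℝ) :
    expect Q ({ω | ω.2.1 z = d}.indicator fun ω => h (ω.1 d))
      = expect Q' ({ω | ω.2.1 z = d}.indicator fun ω => h (ω.1 d)) := by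
  have pinned : ∀ y, pr Q {ω | ω.1 d = y ∧ ω.2.1 z = d} = pr Q' {ω | ω.1 d = y ∧ ω.2.1 z = d} :=
    fun y => mul_right_cancel₀ hz <| by
      rw [hW.pr_outcome_treatment_mul hR, hW'.pr_outcome_treatment_mul hR']
  rw [← sum_pr_preimage_inter_mul Q (fun ω => ω.1 d),
    ← sum_pr_preimage_inter_mul Q' (fun ω => ω.1 d)]
  exact Finset.sum_congr rfl fun y _ => congrArg (· * h y) (pinned y)

theorem pr_treatment_compl_eq (hW : WeakExog Q) (hR : Rationalizes Q P)
    (hW' : WeakExog Q') (hR' : Rationalizes Q' P) {z : Z} (hz : prZ P z ≠ 0) (d : D) :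
    pr Q {ω | ω.2.1 z = d}ᶜ = pr Q' {ω | ω.2.1 z = d}ᶜ := by
  rw [pr_compl, pr_compl, pr_eq_expect, pr_eq_expect]
  exact congrArg (1 - ·) (expect_indicator_treatment_eq hW hR hW' hR' hz d 1)

end Identification

section Construction

noncomputable def withIndepInstrument (R : ProbMass ((D → ↥𝒴) × (Z → D))) (μ : ProbMass Z) :
    ProbMass (Latent 𝒴 D Z) :=
  (R.prod μ).map fun p => (p.1.1, p.1.2, p.2)

open Classical in
noncomputable def redraw (Q : ProbMass (Latent 𝒴 D Z)) (U : ProbMass (D → ↥𝒴)) :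
    ProbMass ((D → ↥𝒴) × (Z → D)) :=
  (Q.prod U).map fun p => ((Set.range p.1.2.1).piecewise p.1.1 p.2, p.1.2.1)

variable (R : ProbMass ((D → ↥𝒴) × (Z → D))) (μ : ProbMass Z)

theorem pr_withIndepInstrument (A : Set ((D → ↥𝒴) × (Z → D))) (C : Set Z) :
    pr (withIndepInstrument R μ) {ω | (ω.1, ω.2.1) ∈ A ∧ ω.2.2 ∈ C} = pr R A * pr μ C := by
  rw [withIndepInstrument, pr_map, ← pr_prod]
  rfl

theorem pr_withIndepInstrument_treatments (B : Set (Z → D)) :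
    pr (withIndepInstrument R μ) {ω | ω.2.1 ∈ B} = pr R {x | x.2 ∈ B} := by
  simpa [pr_univ] using pr_withIndepInstrument R μ {x | x.2 ∈ B} Set.univ

theorem expect_withIndepInstrument_outcome (d : D) :
    expect (withIndepInstrument R μ) (fun ω => (ω.1 d : ℝ))
      = expect R (fun x => (x.1 d : ℝ)) := by
  rw [withIndepInstrument, expect_map]
  exact expect_prod_fst R μ fun x => (x.1 d : ℝ)

theorem weakExog_withIndepInstrument : WeakExog (withIndepInstrument R μ) := by
  intro d z y dv zv
  have key := pr_withIndepInstrument R μ {x | x.1 d = y ∧ x.2 z = dv}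
  have h₁ := key {zv}
  have h₂ := key Set.univ
  have h₃ := pr_withIndepInstrument R μ Set.univ {zv}
  simp only [Set.mem_ofPred_eq, Set.mem_singleton_iff, Set.mem_univ, and_true, true_and,
    pr_univ, mul_one, one_mul, and_assoc] at h₁ h₂ h₃
  rw [h₁, h₂, h₃]

variable (Q : ProbMass (Latent 𝒴 D Z)) (U : ProbMass (D → ↥𝒴))

theorem pr_redraw_treatments (B : Set (Z → D)) :
    pr (redraw Q U) {x | x.2 ∈ B} = pr Q {ω | ω.2.1 ∈ B} := by
  rw [redraw, pr_map]
  exact pr_prod_preimage_fst Q U {ω | ω.2.1 ∈ B}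

theorem pr_redraw_outcome_treatment (y : ↥𝒴) (d : D) (z : Z) :
    pr (redraw Q U) {x | x.1 d = y ∧ x.2 z = d} = pr Q {ω | ω.1 d = y ∧ ω.2.1 z = d} := by
  rw [redraw, pr_map, ← pr_prod_preimage_fst Q U]
  congr 1
  ext ⟨ω, u⟩
  exact and_congr_left fun hz => by
    dsimp only
    rw [Set.piecewise_eq_of_mem (Set.range ω.2.1) ω.1 u ⟨z, hz⟩]

theorem expect_redraw_outcome (d : D) :
    expect (redraw Q U) (fun x => (x.1 d : ℝ))
      = expect Q ({ω | d ∈ Set.range ω.2.1}.indicator fun ω => (ω.1 d : ℝ))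
        + pr Q {ω | d ∈ Set.range ω.2.1}ᶜ * expect U (fun u => (u d : ℝ)) := by
  set S := {ω : Latent 𝒴 D Z | d ∈ Set.range ω.2.1}
  have split : ((fun x => (x.1 d : ℝ)) ∘ fun p : Latent 𝒴 D Z × (D → ↥𝒴) =>
        ((Set.range p.1.2.1).piecewise p.1.1 p.2, p.1.2.1))
      = (fun p => S.indicator (fun ω => (ω.1 d : ℝ)) p.1)
        + fun p => Sᶜ.indicator 1 p.1 * (p.2 d : ℝ) := by
    funext ⟨ω, u⟩
    by_cases h : ∃ z, ω.2.1 z = d <;> simp [S, Set.piecewise, h]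
  rw [redraw, expect_map, split, expect_add, expect_prod_fst,
    expect_prod_mul Q U (Sᶜ.indicator 1) fun u => (u d : ℝ), ← pr_eq_expect]

end Construction

section Properties

variable {P : ProbMass (Obs 𝒴 D Z)} {Q : ProbMass (Latent 𝒴 D Z)} (U : ProbMass (D → ↥𝒴))

theorem GenMono.withIndepInstrument_redraw (hG : GenMono Q) (μ : ProbMass Z) :
    GenMono (withIndepInstrument (redraw Q U) μ) := fun d => (hG d).imp fun z hM =>
  (pr_withIndepInstrument_treatments _ μ {dz | dz z ≠ d ∧ ∃ z', dz z' = d}).trans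
    ((pr_redraw_treatments Q U _).trans hM)

theorem Rationalizes.withIndepInstrument_redraw (hW : WeakExog Q) (hR : Rationalizes Q P) :
    Rationalizes (withIndepInstrument (redraw Q U) (P.map fun o => o.2.2)) P := by
  rintro ⟨y, d, z⟩
  calc P.mass (y, d, z) = pr Q {ω | ω.1 d = y ∧ ω.2.1 z = d} * prZ P z :=
        (hW.pr_outcome_treatment_mul hR y d z).symm
    _ = pr (withIndepInstrument (redraw Q U) (P.map fun o => o.2.2))
          {ω | (ω.1, ω.2.1) ∈ {x | x.1 d = y ∧ x.2 z = d} ∧ ω.2.2 ∈ ({z} : Set Z)} := by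
        rw [pr_withIndepInstrument, pr_map, pr_redraw_outcome_treatment]
        rfl
    _ = _ := by
        rw [setOf_Tmap_eq]
        exact congrArg _ (Set.ext fun ω => and_assoc)

theorem theta_withIndepInstrument_redraw {d : D} {z : Z} (hM : MaxEnc Q d z) (μ : ProbMass Z) :
    theta (withIndepInstrument (redraw Q U) μ) d
      = expect Q ({ω | ω.2.1 z = d}.indicator fun ω => (ω.1 d : ℝ))
        + pr Q {ω | ω.2.1 z = d}ᶜ * expect U (fun u => (u d : ℝ)) := by
  have hiff : ∀ ω ∉ {ω : Latent 𝒴 D Z | ω.2.1 z ≠ d ∧ ∃ z', ω.2.1 z' = d},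
      ω ∈ {ω : Latent 𝒴 D Z | d ∈ Set.range ω.2.1} ↔ ω ∈ {ω : Latent 𝒴 D Z | ω.2.1 z = d} :=
    fun ω hω => ⟨fun hd => not_not.1 fun hne => hω ⟨hne, hd⟩, fun h => ⟨z, h⟩⟩
  rw [theta, expect_withIndepInstrument_outcome, expect_redraw_outcome, pr_eq_expect,
    pr_eq_expect, expect_indicator_congr hM hiff,
    expect_indicator_congr (A := {ω : Latent 𝒴 D Z | d ∈ Set.range ω.2.1}ᶜ)
      (B := {ω : Latent 𝒴 D Z | ω.2.1 z = d}ᶜ) hM fun ω hω => not_congr (hiff ω hω)]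

end Properties

theorem genMono_no_identifying_power_beyond_weak_exogeneity_general
    (𝒴 : Finset ℝ)
    (D Z : Type) [Fintype D] [DecidableEq D]
    [Fintype Z] [DecidableEq Z]
    (P : ProbMass (Obs 𝒴 D Z))
    (hP : ∀ z : Z, 0 < prZ P z)
    (hne : (Q0 P {Q : ProbMass (Latent 𝒴 D Z) | WeakExog Q ∧ GenMono Q}).Nonempty) :
    Theta0 P {Q : ProbMass (Latent 𝒴 D Z) | WeakExog Q ∧ GenMono Q}
      = Theta0 P {Q : ProbMass (Latent 𝒴 D Z) | WeakExog Q} := by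
  obtain ⟨Qb, ⟨hWb, hGb⟩, hRb⟩ := hne
  refine Set.Subset.antisymm (Set.image_mono fun Q hQ => ⟨hQ.1.1, hQ.2⟩) ?_
  rintro _ ⟨Q, ⟨hW, hR⟩, rfl⟩
  choose zs hzs using hGb
  choose ν hν using fun d => exists_pr_mul_expect_eq Q {ω : Latent 𝒴 D Z | ω.2.1 (zs d) = d}ᶜ
    (fun ω => ω.1 d) fun y => (y : ℝ)
  refine ⟨withIndepInstrument (redraw Qb (pi ν)) (P.map fun o => o.2.2), ⟨⟨?_, ?_⟩, ?_⟩, ?_⟩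
  · exact weakExog_withIndepInstrument _ _
  · exact GenMono.withIndepInstrument_redraw _ (fun d => ⟨zs d, hzs d⟩) _
  · exact hRb.withIndepInstrument_redraw _ hWb
  funext d
  have hz := (hP (zs d)).ne'
  rw [theta_withIndepInstrument_redraw _ (hzs d), expect_pi_apply,
    expect_indicator_treatment_eq hWb hRb hW hR hz, pr_treatment_compl_eq hWb hRb hW hR hz, hν d]
  exact expect_indicator_add_compl Q _ _

/-- Corollary 3.3: adding generalized monotonicity to weak instrument
exogeneity does not change the identified set for the vector of average potential outcomes
whenever these assumptions are consistent with `P`. -/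
theorem genMono_no_identifying_power_beyond_weak_exogeneity
    (𝒴 : Finset ℝ) (h𝒴 : 2 ≤ 𝒴.card)
    (D Z : Type) [Fintype D] [DecidableEq D] [Nontrivial D]
    [Fintype Z] [DecidableEq Z] [Nontrivial Z]
    (P : ProbMass (Obs 𝒴 D Z))
    (hP : ∀ z : Z, 0 < prZ P z)
    (hne : (Q0 P {Q : ProbMass (Latent 𝒴 D Z) | WeakExog Q ∧ GenMono Q}).Nonempty) :
    Theta0 P {Q : ProbMass (Latent 𝒴 D Z) | WeakExog Q ∧ GenMono Q}
      = Theta0 P {Q : ProbMass (Latent 𝒴 D Z) | WeakExog Q} :=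
  genMono_no_identifying_power_beyond_weak_exogeneity_general 𝒴 D Z P hP hne
end

section
/- Suppose the latent distribution Q satisfies unordered monotonicity: for every d ∈ 𝒟 and every z, z' ∈ 𝒵, either Q{1{D_z = d} ≥ 1{D_{z'} = d}} = 1 or Q{1{D_z = d} ≤ 1{D_{z'} = d}} = 1. Then Q satisfies generalized monotonicity: for each d ∈ 𝒟 there exists z* ∈ 𝒵 such that Q{D_{z*} ≠ d and D_{z'} = d for some z' ∈ 𝒵} = 0. -/
open Finset

variable {𝒴 : Finset ℝ} {D Z : Type} [Fintype D] [DecidableEq D] [Fintype Z] [DecidableEq Z]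

section Aux

variable {α : Type} [Fintype α]

lemma pr_nonneg (Q : ProbMass α) (A : Set α) : 0 ≤ pr Q A := by
  apply Finset.sum_nonneg
  intro a _
  exact Set.indicator_nonneg (fun x _ => Q.nonneg x) a

lemma pr_add_compl (Q : ProbMass α) (A : Set α) : pr Q A + pr Q Aᶜ = 1 := by
  rw [pr, pr, ← Finset.sum_add_distrib, ← Q.total]
  refine Finset.sum_congr rfl fun a _ => ?_
  by_cases h : a ∈ A
  · simp [Set.indicator_of_mem h, Set.indicator_of_notMem (by simpa using h : a ∉ Aᶜ)]
  · simp [Set.indicator_of_notMem h, Set.indicator_of_mem (by simpa using h : a ∈ Aᶜ)]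

lemma pr_compl_eq_zero (Q : ProbMass α) {A : Set α} (h : pr Q A = 1) : pr Q Aᶜ = 0 := by
  have := pr_add_compl Q A
  linarith

lemma pr_mono (Q : ProbMass α) {A B : Set α} (h : A ⊆ B) : pr Q A ≤ pr Q B := by
  apply Finset.sum_le_sum
  intro a _
  by_cases ha : a ∈ A
  · rw [Set.indicator_of_mem ha, Set.indicator_of_mem (h ha)]
  · rw [Set.indicator_of_notMem ha]
    exact Set.indicator_nonneg (fun x _ => Q.nonneg x) a

lemma pr_inter_add_diff (Q : ProbMass α) (A B : Set α) :
    pr Q A = pr Q (A ∩ B) + pr Q (A \ B) := by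
  rw [pr, pr, pr, ← Finset.sum_add_distrib]
  refine Finset.sum_congr rfl fun a _ => ?_
  by_cases ha : a ∈ A
  · by_cases hb : a ∈ B
    · rw [Set.indicator_of_mem ha, Set.indicator_of_mem (Set.mem_inter ha hb),
        Set.indicator_of_notMem (fun h => h.2 hb)]
      ring
    · rw [Set.indicator_of_mem ha, Set.indicator_of_notMem (fun h => hb h.2),
        Set.indicator_of_mem (Set.mem_diff_of_mem ha hb)]
      ring
  · rw [Set.indicator_of_notMem ha, Set.indicator_of_notMem (fun h => ha h.1),
      Set.indicator_of_notMem (fun h => ha h.1)]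
    ring

lemma pr_le_sum {ι : Type} [Fintype ι] (Q : ProbMass α) (A : Set α) (B : ι → Set α)
    (h : A ⊆ ⋃ i, B i) : pr Q A ≤ ∑ i, pr Q (B i) := by
  have step : ∀ a, A.indicator Q.mass a ≤ ∑ i, (B i).indicator Q.mass a := by
    intro a
    by_cases ha : a ∈ A
    · obtain ⟨i, hi⟩ := Set.mem_iUnion.mp (h ha)
      rw [Set.indicator_of_mem ha]
      calc Q.mass a = (B i).indicator Q.mass a := (Set.indicator_of_mem hi _).symm
        _ ≤ ∑ j, (B j).indicator Q.mass a := by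
            apply Finset.single_le_sum (f := fun j => (B j).indicator Q.mass a)
              (fun j _ => Set.indicator_nonneg (fun x _ => Q.nonneg x) a) (Finset.mem_univ i)
    · rw [Set.indicator_of_notMem ha]
      exact Finset.sum_nonneg fun j _ => Set.indicator_nonneg (fun x _ => Q.nonneg x) a
  calc pr Q A = ∑ a, A.indicator Q.mass a := rfl
    _ ≤ ∑ a, ∑ i, (B i).indicator Q.mass a := Finset.sum_le_sum fun a _ => step a
    _ = ∑ i, pr Q (B i) := Finset.sum_comm

end Aux

/-- Example 4.3: unordered monotonicity implies generalized monotonicity.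
The event `1{D_z = d} ≥ 1{D_{z'} = d}` is expressed as `D_{z'} = d → D_z = d`. -/
theorem unordered_monotonicity_implies_genMono
    (𝒴 : Finset ℝ) (h𝒴 : 2 ≤ 𝒴.card)
    (D Z : Type) [Fintype D] [DecidableEq D] [Nontrivial D]
    [Fintype Z] [DecidableEq Z] [Nontrivial Z]
    (Q : ProbMass (Latent 𝒴 D Z))
    (hUM : ∀ (d : D) (z z' : Z),
      pr Q {ω | ω.2.1 z' = d → ω.2.1 z = d} = 1 ∨
      pr Q {ω | ω.2.1 z = d → ω.2.1 z' = d} = 1) :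
    GenMono Q := by
  intro d
  set S : Z → Set (Latent 𝒴 D Z) := fun z => {ω | ω.2.1 z = d} with hS
  obtain ⟨zs, -, hmax⟩ := Finset.exists_max_image Finset.univ (fun z => pr Q (S z))
    ⟨Classical.arbitrary Z, Finset.mem_univ _⟩
  refine ⟨zs, ?_⟩
  have key : ∀ z, pr Q (S z \ S zs) = 0 := by
    intro z
    rcases hUM d zs z with h | h
    · have h0 := pr_compl_eq_zero Q h
      have heq : S z \ S zs = {ω : Latent 𝒴 D Z | ω.2.1 z = d → ω.2.1 zs = d}ᶜ := by
        ext ω; simp only [hS, Set.mem_diff, Set.mem_setOf_eq, Set.mem_compl_iff]; tauto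
      rw [heq]; exact h0
    · have h0 := pr_compl_eq_zero Q h
      have heq : S zs \ S z = {ω : Latent 𝒴 D Z | ω.2.1 zs = d → ω.2.1 z = d}ᶜ := by
        ext ω; simp only [hS, Set.mem_diff, Set.mem_setOf_eq, Set.mem_compl_iff]; tauto
      have e2 : pr Q (S zs \ S z) = 0 := by rw [heq]; exact h0
      have e1 := pr_inter_add_diff Q (S zs) (S z)
      have e3 := pr_inter_add_diff Q (S z) (S zs)
      have e4 : pr Q (S z ∩ S zs) = pr Q (S zs ∩ S z) := by rw [Set.inter_comm]
      have e5 : pr Q (S z) ≤ pr Q (S zs) := hmax z (Finset.mem_univ z)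
      have e6 : 0 ≤ pr Q (S z \ S zs) := pr_nonneg Q _
      linarith
  unfold MaxEnc
  have hsub : {ω : Latent 𝒴 D Z | ω.2.1 zs ≠ d ∧ ∃ z' : Z, ω.2.1 z' = d}
      ⊆ ⋃ z, (S z \ S zs) := by
    rintro ω ⟨hne, z', hz'⟩
    exact Set.mem_iUnion.mpr ⟨z', hz', hne⟩
  have hle := pr_le_sum Q _ _ hsub
  have : (∑ z, pr Q (S z \ S zs)) = 0 := Finset.sum_eq_zero fun z _ => key z
  have h0 := pr_nonneg Q {ω : Latent 𝒴 D Z | ω.2.1 zs ≠ d ∧ ∃ z' : Z, ω.2.1 z' = d}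
  linarith
end

section
/- Suppose 𝒴 = 𝒟 = 𝒵 = {0, 1}, the latent distribution Q satisfies instrument exogeneity and Q{D_0 = D_1} = 0 (every unit is a complier or a defier), Q rationalizes P (P = Q∘T^{-1}), and P{Z = z} > 0 for z ∈ {0, 1}. Then for every y ∈ {0, 1}: Q{Y_1 = y} = P{Y = y, D = 1 | Z = 1} + P{Y = y, D = 1 | Z = 0} and Q{Y_0 = y} = P{Y = y, D = 0 | Z = 0} + P{Y = y, D = 0 | Z = 1}; in particular, the marginal distributions of Y_0 and Y_1, and hence E_Q[Y_0], E_Q[Y_1], and the average treatment effect E_Q[Y_1 − Y_0], are point identified. -/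
open Finset

variable {𝒴 : Finset ℝ} {D Z : Type} [Fintype D] [DecidableEq D] [Fintype Z] [DecidableEq Z]

section Helpers

variable {α : Type} [Fintype α]

lemma pr_eq_sum' (Q : ProbMass α) (A : Set α) [DecidablePred (· ∈ A)] :
    pr Q A = ∑ a, if a ∈ A then Q.mass a else 0 := by
  unfold pr
  refine Finset.sum_congr rfl fun a _ => ?_
  rw [Set.indicator_apply]

lemma pr_congr' (Q : ProbMass α) {A B : Set α}
    (h : ∀ a, Q.mass a ≠ 0 → (a ∈ A ↔ a ∈ B)) : pr Q A = pr Q B := by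
  classical
  rw [pr_eq_sum', pr_eq_sum']
  refine Finset.sum_congr rfl fun a _ => ?_
  by_cases hm : Q.mass a = 0
  · split_ifs <;> simp [hm]
  · simp [h a hm]

lemma mass_eq_zero' {Q : ProbMass α} {A : Set α} (h : pr Q A = 0)
    {a : α} (ha : a ∈ A) : Q.mass a = 0 := by
  classical
  rw [pr_eq_sum'] at h
  have h2 := (Finset.sum_eq_zero_iff_of_nonneg
    (fun x _ => by by_cases hx : x ∈ A <;> simp [hx, Q.nonneg x])).mp h a (Finset.mem_univ a)
  simpa [ha] using h2

lemma pr_add_pr' (Q : ProbMass α) (A B C : Set α)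
    (h : ∀ a, Q.mass a ≠ 0 → ((a ∈ C ↔ (a ∈ A ∨ a ∈ B)) ∧ ¬(a ∈ A ∧ a ∈ B))) :
    pr Q A + pr Q B = pr Q C := by
  classical
  rw [pr_eq_sum', pr_eq_sum', pr_eq_sum', ← Finset.sum_add_distrib]
  refine Finset.sum_congr rfl fun a _ => ?_
  by_cases hm : Q.mass a = 0
  · split_ifs <;> simp [hm]
  · obtain ⟨h1, h2⟩ := h a hm
    by_cases hA : a ∈ A <;> by_cases hB : a ∈ B <;> simp_all

end Helpers

section Push

variable {𝒴 : Finset ℝ} {D Z : Type} [Fintype D] [DecidableEq D] [Fintype Z] [DecidableEq Z]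

lemma pr_push {Q : ProbMass (Latent 𝒴 D Z)} {P : ProbMass (Obs 𝒴 D Z)}
    (hR : Rationalizes Q P) (A : Set (Obs 𝒴 D Z)) :
    pr P A = pr Q (Tmap ⁻¹' A) := by
  classical
  rw [pr_eq_sum', pr_eq_sum']
  have step : ∀ o, (if o ∈ A then P.mass o else 0)
      = ∑ ω, if Tmap ω = o then (if o ∈ A then Q.mass ω else 0) else 0 := by
    intro o
    by_cases h : o ∈ A
    · simp only [h, if_true, hR o, pr_eq_sum']
      exact Finset.sum_congr rfl fun ω _ => by simp [Set.mem_setOf_eq]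
    · simp [h]
  simp_rw [step]
  rw [Finset.sum_comm]
  refine Finset.sum_congr rfl fun ω _ => ?_
  rw [Finset.sum_ite_eq Finset.univ (Tmap ω) (fun o => if o ∈ A then Q.mass ω else 0)]
  simp [Set.mem_preimage]

lemma exog_event {Q : ProbMass (Latent 𝒴 D Z)} (hE : Exog Q)
    (F : (D → ↥𝒴) → (Z → D) → Prop) (z : Z) :
    pr Q {ω | F ω.1 ω.2.1 ∧ ω.2.2 = z}
      = pr Q {ω | F ω.1 ω.2.1} * pr Q {ω | ω.2.2 = z} := by
  classical
  have expand : ∀ (c : Latent 𝒴 D Z → Prop),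
      pr Q {ω | F ω.1 ω.2.1 ∧ c ω}
        = ∑ p : (D → ↥𝒴) × (Z → D),
            if F p.1 p.2 then pr Q {ω | ω.1 = p.1 ∧ ω.2.1 = p.2 ∧ c ω} else 0 := by
    intro c
    have step : ∀ p : (D → ↥𝒴) × (Z → D),
        (if F p.1 p.2 then pr Q {ω | ω.1 = p.1 ∧ ω.2.1 = p.2 ∧ c ω} else 0)
          = ∑ ω, if (ω.1, ω.2.1) = p ∧ (F ω.1 ω.2.1 ∧ c ω) then Q.mass ω else 0 := by
      intro p
      by_cases hF : F p.1 p.2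
      · simp only [hF, if_true, pr_eq_sum']
        refine Finset.sum_congr rfl fun ω _ => ?_
        congr 1
        simp only [Set.mem_setOf_eq, Prod.ext_iff, eq_iff_iff]
        constructor
        · rintro ⟨h1, h2, h3⟩; exact ⟨⟨h1, h2⟩, by rw [h1, h2]; exact hF, h3⟩
        · rintro ⟨⟨h1, h2⟩, _, h3⟩; exact ⟨h1, h2, h3⟩
      · rw [eq_comm]
        refine (Finset.sum_eq_zero fun ω _ => ?_).trans (by simp [hF])
        split_ifs with h
        · obtain ⟨h1, h2, _⟩ := h
          rw [← h1] at hF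
          exact absurd h2 hF
        · rfl
    simp_rw [step]
    rw [Finset.sum_comm]
    rw [pr_eq_sum']
    refine Finset.sum_congr rfl fun ω _ => ?_
    simp_rw [ite_and]
    rw [Finset.sum_ite_eq Finset.univ ((ω.1, ω.2.1))
      (fun _ => if F ω.1 ω.2.1 then if c ω then Q.mass ω else 0 else 0)]
    simp [Set.mem_setOf_eq, ite_and]
  have h1 := expand (fun ω => ω.2.2 = z)
  have h2 : pr Q {ω | F ω.1 ω.2.1} = pr Q {ω : Latent 𝒴 D Z | F ω.1 ω.2.1 ∧ (fun _ => True) ω} := by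
    congr 1
    ext ω
    simp
  rw [h1, h2, expand (fun _ => True)]
  simp only [and_true]
  rw [Finset.sum_mul]
  refine Finset.sum_congr rfl fun p _ => ?_
  rw [ite_mul, zero_mul]
  by_cases hF : F p.1 p.2
  · simp only [hF, if_true]
    exact hE p.1 p.2 z
  · simp [hF]

end Push
section Main

variable {D Z : Type} [Fintype D] [DecidableEq D] [Fintype Z] [DecidableEq Z]

lemma pObs_eq {𝒴 : Finset ℝ} {Q : ProbMass (Latent 𝒴 D Z)} {P : ProbMass (Obs 𝒴 D Z)}
    (hE : Exog Q) (hR : Rationalizes Q P) {z : Z} (hz : 0 < prZ P z) (y : ℝ) (d : D) :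
    pObs P y d z = pr Q {ω | (ω.1 (ω.2.1 z) : ℝ) = y ∧ ω.2.1 z = d} := by
  have hprZ : prZ P z = pr Q {ω : Latent 𝒴 D Z | ω.2.2 = z} := by
    rw [prZ, pr_push hR]
    rfl
  rw [pObs, pr_push hR]
  have hset : Tmap ⁻¹' {o : Obs 𝒴 D Z | (o.1 : ℝ) = y ∧ o.2.1 = d ∧ o.2.2 = z}
      = {ω : Latent 𝒴 D Z | ((ω.1 (ω.2.1 z) : ℝ) = y ∧ ω.2.1 z = d) ∧ ω.2.2 = z} := by
    ext ω
    simp only [Set.mem_preimage, Set.mem_setOf_eq, Tmap]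
    constructor
    · rintro ⟨a, b, c⟩
      subst c
      exact ⟨⟨a, b⟩, rfl⟩
    · rintro ⟨⟨a, b⟩, c⟩
      subst c
      exact ⟨a, b, rfl⟩
  rw [hset, exog_event hE (fun yd dz => (yd (dz z) : ℝ) = y ∧ dz z = d) z, ← hprZ,
    mul_div_assoc, div_self hz.ne', mul_one]

lemma fin2_cases (x : Fin 2) : x = 0 ∨ x = 1 := by omega

lemma ident {Q : ProbMass (Latent ({0, 1} : Finset ℝ) (Fin 2) (Fin 2))}
    {P : ProbMass (Obs ({0, 1} : Finset ℝ) (Fin 2) (Fin 2))}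
    (hE : Exog Q)
    (hcd : pr Q {ω | ω.2.1 0 = ω.2.1 1} = 0)
    (hR : Rationalizes Q P)
    (hP : ∀ z : Fin 2, 0 < prZ P z) (y : ℝ) :
    pr Q {ω | (ω.1 1 : ℝ) = y} = pObs P y 1 1 + pObs P y 1 0 ∧
    pr Q {ω | (ω.1 0 : ℝ) = y} = pObs P y 0 0 + pObs P y 0 1 := by
  rw [pObs_eq hE hR (hP 1) y 1, pObs_eq hE hR (hP 0) y 1,
      pObs_eq hE hR (hP 0) y 0, pObs_eq hE hR (hP 1) y 0]
  constructor
  · refine (pr_add_pr' Q _ _ _ fun ω hm => ?_).symm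
    have hne : ω.2.1 0 ≠ ω.2.1 1 := fun h => hm (mass_eq_zero' hcd h)
    simp only [Set.mem_setOf_eq]
    rcases fin2_cases (ω.2.1 0) with h0 | h0 <;> rcases fin2_cases (ω.2.1 1) with h1 | h1 <;>
      simp [h0, h1] at hne ⊢
  · refine (pr_add_pr' Q _ _ _ fun ω hm => ?_).symm
    have hne : ω.2.1 0 ≠ ω.2.1 1 := fun h => hm (mass_eq_zero' hcd h)
    simp only [Set.mem_setOf_eq]
    rcases fin2_cases (ω.2.1 0) with h0 | h0 <;> rcases fin2_cases (ω.2.1 1) with h1 | h1 <;>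
      simp [h0, h1] at hne ⊢

lemma theta_eq_pr {Q : ProbMass (Latent ({0, 1} : Finset ℝ) (Fin 2) (Fin 2))} (d : Fin 2) :
    theta Q d = pr Q {ω | (ω.1 d : ℝ) = 1} := by
  classical
  rw [pr_eq_sum']
  simp only [theta, _root_.expect]
  refine Finset.sum_congr rfl fun ω _ => ?_
  have hv := (ω.1 d).2
  simp only [Finset.mem_insert, Finset.mem_singleton] at hv
  rcases hv with hv | hv <;> simp [Set.mem_setOf_eq, hv]

end Main
/-- Example 5.1: with binary `Y`, `D`, `Z`, instrument exogeneity plus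
"everyone is a complier or a defier" (`Q{D_0 = D_1} = 0`) point identifies the marginal
distributions of `Y_0` and `Y_1`:
`Q{Y_1 = y} = P{Y = y, D = 1 ∣ Z = 1} + P{Y = y, D = 1 ∣ Z = 0}` and
`Q{Y_0 = y} = P{Y = y, D = 0 ∣ Z = 0} + P{Y = y, D = 0 ∣ Z = 1}`; in particular, the
vector of average potential outcomes is point identified. -/
theorem complier_or_defier_point_identification
    (Q : ProbMass (Latent ({0, 1} : Finset ℝ) (Fin 2) (Fin 2)))
    (P : ProbMass (Obs ({0, 1} : Finset ℝ) (Fin 2) (Fin 2)))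
    (hE : Exog Q)
    (hcd : pr Q {ω | ω.2.1 0 = ω.2.1 1} = 0)
    (hR : Rationalizes Q P)
    (hP : ∀ z : Fin 2, 0 < prZ P z) :
    (∀ y ∈ ({0, 1} : Finset ℝ),
      pr Q {ω | (ω.1 1 : ℝ) = y} = pObs P y 1 1 + pObs P y 1 0 ∧
      pr Q {ω | (ω.1 0 : ℝ) = y} = pObs P y 0 0 + pObs P y 0 1) ∧
    (∀ Q' : ProbMass (Latent ({0, 1} : Finset ℝ) (Fin 2) (Fin 2)),
      Exog Q' → pr Q' {ω | ω.2.1 0 = ω.2.1 1} = 0 → Rationalizes Q' P →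
        theta Q' = theta Q) := by

  constructor
  · intro y _
    exact ident hE hcd hR hP y
  · intro Q' hE' hcd' hR'
    funext d
    have hQ := ident hE hcd hR hP 1
    have hQ' := ident hE' hcd' hR' hP 1
    rcases fin2_cases d with h | h <;> subst h
    · rw [theta_eq_pr, theta_eq_pr, hQ'.2, hQ.2]
    · rw [theta_eq_pr, theta_eq_pr, hQ'.1, hQ.1]
end
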